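/- arXiv:1904.09369 — 5 statements merged into one kernel-verified Lean document; each statement's English description precedes it below -/
import Mathlib

section
/- Let w_1 ∈ K, let (g_t)_{t≥1} be arbitrary vectors of H, let (η_t)_{t≥1} be a nonincreasing sequence of positive reals, and define the projected sub-gradient descent iterates w_{t+1} = Π_K(w_t − η_t g_t) for t ≥ 1. Then for every w* ∈ K and every T ≥ 1, the linearized regret satisfies ∑_{t=1}^T ⟨g_t, w_t − w*⟩ ≤ D²/(2 η_T) + ∑_{t=1}^T (η_t/2)‖g_t‖². -/
open Finset
open scoped RealInnerProductSpace

/-!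
Each step of projected descent contracts the distance to `w*`, because the projection onto a
convex set is nonexpansive towards its points. Expanding the square gives
`⟪g t, w t - w*⟫ ≤ (‖w t - w*‖² - ‖w (t+1) - w*‖²) / (2 η t) + η t / 2 ‖g t‖²`.
Summing, the distance terms form an Abel sum with nondecreasing weights `1 / (2 η t)` and
entries bounded by `D²`, which is at most `D² / (2 η T)`.
-/

section InnerProductSpace

variable {F : Type*} [NormedAddCommGroup F] [InnerProductSpace ℝ F]

theorem real_inner_sub_le_zero_of_forall_norm_sub_le {K : Set F} (hK : Convex ℝ K)
    {v p : F} (hp : p ∈ K) (hmin : ∀ u ∈ K, ‖v - p‖ ≤ ‖v - u‖) {u : F} (hu : u ∈ K) :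
    ⟪v - p, u - p⟫ ≤ 0 := by
  have : Nonempty K := ⟨⟨p, hp⟩⟩
  refine (norm_eq_iInf_iff_real_inner_le_zero hK hp).1 (le_antisymm ?_ ?_) u hu
  · exact le_ciInf fun x => hmin x x.2
  · exact ciInf_le ⟨0, Set.forall_mem_range.2 fun _ => norm_nonneg _⟩ (⟨p, hp⟩ : K)

theorem norm_sub_le_of_forall_norm_sub_le {K : Set F} (hK : Convex ℝ K)
    {v p : F} (hp : p ∈ K) (hmin : ∀ u ∈ K, ‖v - p‖ ≤ ‖v - u‖) {u : F} (hu : u ∈ K) :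
    ‖p - u‖ ≤ ‖v - u‖ := by
  have hobtuse := real_inner_sub_le_zero_of_forall_norm_sub_le hK hp hmin hu
  have hexpand := norm_sub_sq_real (v - p) (u - p)
  rw [sub_sub_sub_cancel_right] at hexpand
  rw [norm_sub_rev]
  exact (pow_le_pow_iff_left₀ (norm_nonneg _) (norm_nonneg _) two_ne_zero).1
    (by nlinarith [sq_nonneg ‖v - p‖])

theorem real_inner_le_of_norm_sub_le_norm_sub_smul {x y u g : F} {η : ℝ} (hη : 0 < η)
    (hy : ‖y - u‖ ≤ ‖x - η • g - u‖) :
    ⟪g, x - u⟫ ≤ (‖x - u‖ ^ 2 - ‖y - u‖ ^ 2) / (2 * η) + η / 2 * ‖g‖ ^ 2 := by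
  have hsq := pow_le_pow_left₀ (norm_nonneg _) hy 2
  rw [sub_right_comm, norm_sub_sq_real (x - u), real_inner_smul_right, real_inner_comm,
    norm_smul, Real.norm_of_nonneg hη.le] at hsq
  rw [← sub_le_iff_le_add, le_div_iff₀ (by positivity)]
  nlinarith

end InnerProductSpace

theorem sum_Icc_sub_succ_mul_le {a c : ℕ → ℝ} {M : ℝ} (haM : ∀ t, 1 ≤ t → a t ≤ M)
    (hc : ∀ s t, 1 ≤ s → s ≤ t → c s ≤ c t) (hc₁ : 0 ≤ c 1) {T : ℕ} (hT : 1 ≤ T) :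
    ∑ t ∈ Icc 1 T, (a t - a (t + 1)) * c t ≤ (M - a (T + 1)) * c T := by
  induction T, hT using Nat.le_induction with
  | base => simpa using mul_le_mul_of_nonneg_right (sub_le_sub_right (haM 1 le_rfl) _) hc₁
  | succ n hn ih =>
    rw [sum_Icc_succ_top (by omega)]
    have hcn := hc n (n + 1) hn n.le_succ
    nlinarith [mul_le_mul_of_nonneg_left hcn (sub_nonneg.2 (haM (n + 1) (by omega)))]

theorem stmt0_general
    {H : Type*} [NormedAddCommGroup H] [InnerProductSpace ℝ H]
    (K : Set H) (hKconvex : Convex ℝ K)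
    (D : ℝ) (hD : ∀ w ∈ K, ∀ v ∈ K, ‖w - v‖ ≤ D)
    (proj : H → H)
    (hproj_mem : ∀ v, proj v ∈ K)
    (hproj_min : ∀ v, ∀ u ∈ K, ‖v - proj v‖ ≤ ‖v - u‖)
    (g : ℕ → H) (η : ℕ → ℝ)
    (hηpos : ∀ t, 1 ≤ t → 0 < η t)
    (hηanti : ∀ s t, 1 ≤ s → s ≤ t → η t ≤ η s)
    (w : ℕ → H) (hw1 : w 1 ∈ K)
    (hiter : ∀ t, 1 ≤ t → w (t + 1) = proj (w t - η t • g t))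
    (wstar : H) (hwstar : wstar ∈ K)
    (T : ℕ) (hT : 1 ≤ T) :
    (∑ t ∈ Icc 1 T, ⟪g t, w t - wstar⟫) ≤
      D ^ 2 / (2 * η T) + ∑ t ∈ Icc 1 T, η t / 2 * ‖g t‖ ^ 2 := by
  set a : ℕ → ℝ := fun t => ‖w t - wstar‖ ^ 2
  set c : ℕ → ℝ := fun t => (2 * η t)⁻¹
  have hwK (t : ℕ) (ht : 1 ≤ t) : w t ∈ K := by
    induction t, ht using Nat.le_induction with
    | base => exact hw1
    | succ n hn _ => exact hiter n hn ▸ hproj_mem _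
  have hstep : ∀ t ∈ Icc 1 T,
      ⟪g t, w t - wstar⟫ ≤ (a t - a (t + 1)) * c t + η t / 2 * ‖g t‖ ^ 2 := by
    intro t ht
    have ht : 1 ≤ t := (mem_Icc.1 ht).1
    refine (real_inner_le_of_norm_sub_le_norm_sub_smul (hηpos t ht) ?_).trans_eq
      (by rw [div_eq_mul_inv])
    rw [hiter t ht]
    exact norm_sub_le_of_forall_norm_sub_le hKconvex (hproj_mem _) (hproj_min _) hwstar
  have haD (t : ℕ) (ht : 1 ≤ t) : a t ≤ D ^ 2 :=
    pow_le_pow_left₀ (norm_nonneg _) (hD _ (hwK t ht) _ hwstar) 2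
  have hc (s t : ℕ) (hs : 1 ≤ s) (hst : s ≤ t) : c s ≤ c t :=
    inv_anti₀ (by linarith [hηpos t (hs.trans hst)]) (by linarith [hηanti s t hs hst])
  have hcT : 0 ≤ c T := inv_nonneg.2 (by linarith [hηpos T hT])
  calc (∑ t ∈ Icc 1 T, ⟪g t, w t - wstar⟫)
      ≤ ∑ t ∈ Icc 1 T, ((a t - a (t + 1)) * c t + η t / 2 * ‖g t‖ ^ 2) := sum_le_sum hstep
    _ = ∑ t ∈ Icc 1 T, (a t - a (t + 1)) * c t + ∑ t ∈ Icc 1 T, η t / 2 * ‖g t‖ ^ 2 :=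
        sum_add_distrib
    _ ≤ (D ^ 2 - a (T + 1)) * c T + ∑ t ∈ Icc 1 T, η t / 2 * ‖g t‖ ^ 2 := by
        gcongr
        exact sum_Icc_sub_succ_mul_le haD hc (inv_nonneg.2 (by linarith [hηpos 1 le_rfl])) hT
    _ ≤ D ^ 2 / (2 * η T) + ∑ t ∈ Icc 1 T, η t / 2 * ‖g t‖ ^ 2 := by
        rw [div_eq_mul_inv]
        gcongr
        exact sub_le_self _ (sq_nonneg _)

/-- regret bound for projected sub-gradient descent with
nonincreasing positive step sizes. -/
theorem stmt0
    {H : Type*} [NormedAddCommGroup H] [InnerProductSpace ℝ H]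
    (K : Set H) (hKne : K.Nonempty) (hKclosed : IsClosed K) (hKconvex : Convex ℝ K)
    (D : ℝ) (hD : ∀ w ∈ K, ∀ v ∈ K, ‖w - v‖ ≤ D)
    (proj : H → H)
    (hproj_mem : ∀ v, proj v ∈ K)
    (hproj_min : ∀ v, ∀ u ∈ K, ‖v - proj v‖ ≤ ‖v - u‖)
    (g : ℕ → H) (η : ℕ → ℝ)
    (hηpos : ∀ t, 1 ≤ t → 0 < η t)
    (hηanti : ∀ s t, 1 ≤ s → s ≤ t → η t ≤ η s)
    (w : ℕ → H) (hw1 : w 1 ∈ K)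
    (hiter : ∀ t, 1 ≤ t → w (t + 1) = proj (w t - η t • g t))
    (wstar : H) (hwstar : wstar ∈ K)
    (T : ℕ) (hT : 1 ≤ T) :
    (∑ t ∈ Icc 1 T, ⟪g t, w t - wstar⟫) ≤
      D ^ 2 / (2 * η T) + ∑ t ∈ Icc 1 T, η t / 2 * ‖g t‖ ^ 2 :=
  stmt0_general K hKconvex D hD proj hproj_mem hproj_min g η hηpos hηanti w hw1 hiter wstar hwstar T
    hT
end

section
/- Let w, w* ∈ K, let g ∈ H, let η > 0, and set w' = Π_K(w − η g). Then ⟨g, w − w*⟩ ≤ (‖w − w*‖² − ‖w' − w*‖²)/(2η) + (η/2)‖g‖². -/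
open scoped RealInnerProductSpace

/-- single-step descent inequality for the projected
sub-gradient update. -/
theorem stmt2
    {H : Type*} [NormedAddCommGroup H] [InnerProductSpace ℝ H]
    (K : Set H) (hKne : K.Nonempty) (hKclosed : IsClosed K) (hKconvex : Convex ℝ K)
    (proj : H → H)
    (hproj_mem : ∀ v, proj v ∈ K)
    (hproj_min : ∀ v, ∀ u ∈ K, ‖v - proj v‖ ≤ ‖v - u‖)
    (w wstar : H) (hw : w ∈ K) (hwstar : wstar ∈ K)
    (g : H) (η : ℝ) (hη : 0 < η)
    (w' : H) (hw' : w' = proj (w - η • g)) :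
    ⟪g, w - wstar⟫ ≤
      (‖w - wstar‖ ^ 2 - ‖w' - wstar‖ ^ 2) / (2 * η) + η / 2 * ‖g‖ ^ 2 := by
  set v := w - η • g with hv
  -- variational inequality
  have hmem : w' ∈ K := hw' ▸ hproj_mem v
  have hinf : ‖v - w'‖ = ⨅ u : K, ‖v - u‖ := by
    apply le_antisymm
    · haveI : Nonempty K := ⟨⟨w', hmem⟩⟩
      exact le_ciInf fun u => hw' ▸ hproj_min v u u.2
    · exact ciInf_le ⟨0, fun _ ⟨_, h⟩ => h ▸ norm_nonneg _⟩ (⟨w', hmem⟩ : K)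
  have hvar : ⟪v - w', wstar - w'⟫ ≤ 0 :=
    (norm_eq_iInf_iff_real_inner_le_zero hKconvex hmem).mp hinf wstar hwstar
  -- nonexpansive toward wstar
  have hkey : ‖w' - wstar‖ ^ 2 ≤ ‖v - wstar‖ ^ 2 := by
    have expand : ‖v - wstar‖ ^ 2
        = ‖v - w'‖ ^ 2 + ‖w' - wstar‖ ^ 2 + 2 * ⟪v - w', w' - wstar⟫ := by
      have : v - wstar = (v - w') + (w' - wstar) := by abel
      rw [this, norm_add_sq_real]; ring
    have h1 : 0 ≤ ⟪v - w', w' - wstar⟫ := by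
      have : ⟪v - w', w' - wstar⟫ = -⟪v - w', wstar - w'⟫ := by
        rw [← inner_neg_right]; congr 1; abel
      linarith [this ▸ neg_nonneg.mpr hvar]
    nlinarith [sq_nonneg ‖v - w'‖]
  have expand2 : ‖v - wstar‖ ^ 2
      = ‖w - wstar‖ ^ 2 - 2 * η * ⟪g, w - wstar⟫ + η ^ 2 * ‖g‖ ^ 2 := by
    have : v - wstar = (w - wstar) - η • g := by rw [hv]; abel
    rw [this, norm_sub_sq_real, inner_smul_right, norm_smul, real_inner_comm]
    simp [abs_of_pos hη, mul_pow]
    ring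
  rw [← sub_nonneg] at hkey ⊢
  have h2 : (‖w - wstar‖ ^ 2 - ‖w' - wstar‖ ^ 2) / (2 * η) + η / 2 * ‖g‖ ^ 2 - ⟪g, w - wstar⟫
      = (‖v - wstar‖ ^ 2 - ‖w' - wstar‖ ^ 2) / (2 * η) := by
    rw [expand2]; field_simp; ring
  rw [h2]
  positivity
end

section
/- Let a_1, …, a_T be nonnegative real numbers. Then ∑_{t=1}^T a_t / √(∑_{τ=1}^t a_τ) ≤ 2 √(∑_{t=1}^T a_t), where any summand whose denominator is zero is interpreted as 0. -/
/-!
Writing `S t = a 1 + ⋯ + a t`, each summand satisfies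
`a t / √(S t) ≤ 2 (√(S t) - √(S (t - 1)))`, by AM-GM applied to `√(S t) · √(S (t - 1))`;
the right-hand sides telescope to `2 √(S T)`.
-/

open Finset

lemma div_sqrt_add_le_two_mul_sub_sqrt {s c : ℝ} (hs : 0 ≤ s) (hc : 0 ≤ c) :
    c / √(s + c) ≤ 2 * (√(s + c) - √s) := by
  rcases (add_nonneg hs hc).eq_or_lt with hzero | hpos
  · have hc0 : c = 0 := by linarith
    have hs0 : s = 0 := by linarith
    simp [hc0, hs0]
  · have hsqrt_pos : 0 < √(s + c) := Real.sqrt_pos.mpr hpos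
    have h_sq_sc : √(s + c) * √(s + c) = s + c := Real.mul_self_sqrt hpos.le
    have h_sq_s : √s * √s = s := Real.mul_self_sqrt hs
    rw [div_le_iff₀ hsqrt_pos]
    nlinarith [sq_nonneg (√(s + c) - √s)]

/-- telescoping inequality for adaptively normalized sums.
(In Lean, division by zero yields `0`, matching the stated convention for
summands with vanishing denominator.) -/
theorem stmt3 (T : ℕ) (a : ℕ → ℝ) (ha : ∀ t, 0 ≤ a t) :
    (∑ t ∈ Icc 1 T, a t / Real.sqrt (∑ τ ∈ Icc 1 t, a τ)) ≤
      2 * Real.sqrt (∑ t ∈ Icc 1 T, a t) := by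
  induction T with
  | zero => simp
  | succ T ih =>
    rw [sum_Icc_succ_top (Nat.le_add_left 1 T), sum_Icc_succ_top (Nat.le_add_left 1 T) a]
    have h_step := div_sqrt_add_le_two_mul_sub_sqrt
      (sum_nonneg fun t _ => ha t : 0 ≤ ∑ τ ∈ Icc 1 T, a τ) (ha (T + 1))
    linarith
end

section
/- Let w_1 ∈ K be deterministic, let (g̃_t)_{1≤t≤T} be square-integrable H-valued random vectors with g̃_t being 𝓕_t-measurable, let (g_t)_{1≤t≤T} be 𝓕_{t−1}-measurable H-valued random vectors with 𝔼[g̃_t | 𝓕_{t−1}] = g_t, and set γ_t = g̃_t − g_t. Define the iterates w_{t+1} = Π_K(w_t − η_t g̃_t) with η_t = D/(√2 · √(∑_{τ=1}^t ‖g̃_τ‖²)) whenever the denominator is positive, and w_{t+1} = w_t otherwise. Let w* ∈ K be fixed and let R be a nonnegative random variable with R ≤ ∑_{t=1}^T ⟨g_t, w_t − w*⟩ almost surely. Then the second moment of R satisfies 𝔼[R²] ≤ D² · 𝔼[∑_{t=1}^T (4‖g_t‖² + 6‖γ_t‖²)] ≤ 6 D² · 𝔼[∑_{t=1}^T ‖g̃_t‖²].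 -/
/-!
Pathwise, the AdaGrad-norm iterates satisfy the deterministic regret bound
`∑ ⟪g̃ₜ, wₜ - w*⟫ ≤ √2 D √S`, `S = ∑ ‖g̃ₜ‖²`: projecting onto `K` does not increase the distance
to `w*`, the inverse step sizes `√2 √Sₜ / D` are nondecreasing so the distance terms telescope
against the diameter bound, and `∑ xₜ / √(x₁ + ⋯ + xₜ) ≤ 2 √(x₁ + ⋯ + x_T)`. Since
`gₜ = g̃ₜ - γₜ`, this gives `R ≤ √2 D √S - M` with `M = ∑ ⟪γₜ, wₜ - w*⟫`, hence
`R² ≤ 4 D² S + 2 M²`. The iterate `wₜ` is `𝓕ₜ₋₁`-measurable and `γₜ` is conditionally centred,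
so the increments of `M` are orthogonal in `L²` and `𝔼 M² ≤ D² ∑ 𝔼 ‖γₜ‖²`; the same
orthogonality gives `𝔼 ‖g̃ₜ‖² = 𝔼 ‖gₜ‖² + 𝔼 ‖γₜ‖²`.
-/

open MeasureTheory Finset
open scoped RealInnerProductSpace

section NearestPoint

variable {H : Type*} [NormedAddCommGroup H] [InnerProductSpace ℝ H] {K : Set H}

theorem real_inner_sub_nearest_le_zero (hK : Convex ℝ K) {v p u : H} (hp : p ∈ K)
    (hmin : ∀ u ∈ K, ‖v - p‖ ≤ ‖v - u‖) (hu : u ∈ K) : ⟪v - p, u - p⟫ ≤ 0 := by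
  have : Nonempty K := ⟨⟨p, hp⟩⟩
  refine (norm_eq_iInf_iff_real_inner_le_zero hK hp).1 (le_antisymm ?_ ?_) u hu
  · exact le_ciInf fun u => hmin u u.2
  · exact ciInf_le ⟨0, Set.forall_mem_range.2 fun _ => norm_nonneg _⟩ (⟨p, hp⟩ : K)

theorem norm_nearest_sub_le (hK : Convex ℝ K) {v p u : H} (hp : p ∈ K)
    (hmin : ∀ u ∈ K, ‖v - p‖ ≤ ‖v - u‖) (hu : u ∈ K) : ‖p - u‖ ≤ ‖v - u‖ := by
  have hinner := real_inner_sub_nearest_le_zero hK hp hmin hu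
  have hexpand : ‖v - u‖ ^ 2 = ‖v - p‖ ^ 2 - 2 * ⟪v - p, u - p⟫ + ‖p - u‖ ^ 2 := by
    rw [show v - u = (v - p) - (u - p) by abel, norm_sub_sq_real, norm_sub_rev u p]
  exact pow_le_pow_iff_left₀ (norm_nonneg _) (norm_nonneg _) two_ne_zero |>.1 <| by
    nlinarith [sq_nonneg ‖v - p‖]

theorem lipschitzWith_one_of_nearest (hK : Convex ℝ K) {proj : H → H}
    (hmem : ∀ v, proj v ∈ K) (hmin : ∀ v, ∀ u ∈ K, ‖v - proj v‖ ≤ ‖v - u‖) :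
    LipschitzWith 1 proj := by
  refine LipschitzWith.of_dist_le_mul fun a b => ?_
  rw [dist_eq_norm, dist_eq_norm, NNReal.coe_one, one_mul]
  have ha := real_inner_sub_nearest_le_zero hK (hmem a) (hmin a) (hmem b)
  have hb := real_inner_sub_nearest_le_zero hK (hmem b) (hmin b) (hmem a)
  have key : ‖proj a - proj b‖ ^ 2 ≤ ⟪a - b, proj a - proj b⟫ := by
    have : ⟪a - b, proj a - proj b⟫ - ‖proj a - proj b‖ ^ 2
        = -⟪a - proj a, proj b - proj a⟫ - ⟪b - proj b, proj a - proj b⟫ := by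
      rw [← real_inner_self_eq_norm_sq]
      simp only [inner_sub_left, inner_sub_right, real_inner_comm (proj b) (proj a)]
      ring
    linarith
  have hcs := real_inner_le_norm (a - b) (proj a - proj b)
  rcases (norm_nonneg (proj a - proj b)).eq_or_lt with h | h
  · rw [← h]; exact norm_nonneg _
  · nlinarith

theorem two_mul_inner_le_of_norm_sub_le {x x' g u : H} {η : ℝ}
    (h : ‖x' - u‖ ≤ ‖x - η • g - u‖) :
    2 * η * ⟪g, x - u⟫ ≤ ‖x - u‖ ^ 2 - ‖x' - u‖ ^ 2 + η ^ 2 * ‖g‖ ^ 2 := by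
  have hexpand : ‖x - η • g - u‖ ^ 2 = ‖x - u‖ ^ 2 - 2 * η * ⟪g, x - u⟫ + η ^ 2 * ‖g‖ ^ 2 := by
    rw [show x - η • g - u = (x - u) - η • g by abel, norm_sub_sq_real, real_inner_smul_right,
      norm_smul, mul_pow, Real.norm_eq_abs, sq_abs, real_inner_comm]
    ring
  nlinarith [pow_le_pow_left₀ (norm_nonneg _) h 2]

end NearestPoint

theorem div_sqrt_add_le_two_mul_sub_sqrt_s7 {a x : ℝ} (ha : 0 ≤ a) (hx : 0 ≤ x) :
    x / √(a + x) ≤ 2 * (√(a + x) - √a) := by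
  have hmono : √a ≤ √(a + x) := Real.sqrt_le_sqrt (by linarith)
  rcases (Real.sqrt_nonneg (a + x)).eq_or_lt with h | h
  · rw [← h, div_zero]; linarith
  · rw [div_le_iff₀ h]
    nlinarith [Real.sq_sqrt ha, Real.sq_sqrt (add_nonneg ha hx)]

theorem sum_div_sqrt_partialSum_le {x : ℕ → ℝ} (hx : ∀ t, 0 ≤ x t) (n : ℕ) :
    ∑ t ∈ Icc 1 n, x t / √(∑ τ ∈ Icc 1 t, x τ) ≤ 2 * √(∑ τ ∈ Icc 1 n, x τ) := by
  induction n with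
  | zero => simp
  | succ n ih =>
    rw [sum_Icc_succ_top (Nat.le_add_left 1 n), sum_Icc_succ_top (Nat.le_add_left 1 n)]
    have := div_sqrt_add_le_two_mul_sub_sqrt_s7 (sum_nonneg fun τ (_ : τ ∈ Icc 1 n) => hx τ)
      (hx (n + 1))
    linarith

theorem sum_Icc_le_of_le_mul_sub_add {a b c d : ℕ → ℝ} {C : ℝ} (hc0 : ∀ t, 0 ≤ c t)
    (hc : Monotone c) (hd0 : ∀ t, 0 ≤ d t) (hdC : ∀ t, 1 ≤ t → d t ≤ C)
    (hstep : ∀ t, 1 ≤ t → a t ≤ c t * (d t - d (t + 1)) + b t) (n : ℕ) :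
    ∑ t ∈ Icc 1 n, a t ≤ c n * C + ∑ t ∈ Icc 1 n, b t := by
  suffices h : ∑ t ∈ Icc 1 n, a t + c n * d (n + 1) ≤ c n * C + ∑ t ∈ Icc 1 n, b t by
    nlinarith [hc0 n, hd0 (n + 1)]
  induction n with
  | zero => simpa using mul_le_mul_of_nonneg_left (hdC 1 le_rfl) (hc0 0)
  | succ n ih =>
    rw [sum_Icc_succ_top (Nat.le_add_left 1 n), sum_Icc_succ_top (Nat.le_add_left 1 n)]
    have hgrow := mul_le_mul_of_nonneg_right (hc n.le_succ) (sub_nonneg.2 (hdC (n + 1) n.succ_pos))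
    linarith [hstep (n + 1) n.succ_pos]

section AdaGradNorm

variable {H : Type*} [NormedAddCommGroup H]

def cumSqNorm (G : ℕ → H) (t : ℕ) : ℝ := ∑ τ ∈ Icc 1 t, ‖G τ‖ ^ 2

theorem cumSqNorm_nonneg (G : ℕ → H) (t : ℕ) : 0 ≤ cumSqNorm G t :=
  sum_nonneg fun _ _ => sq_nonneg _

theorem sq_norm_le_cumSqNorm (G : ℕ → H) {t : ℕ} (ht : 1 ≤ t) : ‖G t‖ ^ 2 ≤ cumSqNorm G t :=
  single_le_sum (f := fun τ => ‖G τ‖ ^ 2) (fun _ _ => sq_nonneg _) (mem_Icc.2 ⟨ht, le_rfl⟩)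

theorem cumSqNorm_mono (G : ℕ → H) : Monotone (cumSqNorm G) := fun _ _ h =>
  sum_le_sum_of_subset_of_nonneg (Icc_subset_Icc_right h) fun _ _ _ => sq_nonneg _

variable [InnerProductSpace ℝ H]

theorem adaGradNorm_step_inner_le {proj : H → H} {D s : ℝ} {x x' g u : H} (hD : 0 < D)
    (hproj : ∀ y, ‖proj y - u‖ ≤ ‖y - u‖) (hgs : ‖g‖ ^ 2 ≤ s)
    (hpos : 0 < √s → x' = proj (x - (D / (√2 * √s)) • g)) :
    ⟪g, x - u⟫ ≤ √s / (√2 * D) * (‖x - u‖ ^ 2 - ‖x' - u‖ ^ 2) + D / (2 * √2) * (‖g‖ ^ 2 / √s) := by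
  rcases (Real.sqrt_nonneg s).eq_or_lt with hs | hs
  · have hg : g = 0 := by
      have := hgs.trans (Real.sqrt_eq_zero'.1 hs.symm)
      exact norm_eq_zero.1 (by nlinarith [norm_nonneg g])
    simp [hg, ← hs]
  · have h2 : (0 : ℝ) < √2 := by positivity
    have hstep := two_mul_inner_le_of_norm_sub_le ((hpos hs).symm ▸ hproj (x - (D / (√2 * √s)) • g))
    have hc : 0 ≤ √s / (√2 * D) := by positivity
    -- `√s / (√2 * D) = 1 / (2η)` for the step size `η = D / (√2 * √s)`.
    calc ⟪g, x - u⟫ = √s / (√2 * D) * (2 * (D / (√2 * √s)) * ⟪g, x - u⟫) := by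
          field_simp
          rw [Real.sq_sqrt zero_le_two]
      _ ≤ √s / (√2 * D) * (‖x - u‖ ^ 2 - ‖x' - u‖ ^ 2 + (D / (√2 * √s)) ^ 2 * ‖g‖ ^ 2) := by
          gcongr
      _ = _ := by
          field_simp
          rw [Real.sq_sqrt zero_le_two]
          ring

theorem adaGradNorm_regret_le {K : Set H} (hK : Convex ℝ K) {D : ℝ}
    (hdiam : ∀ w ∈ K, ∀ v ∈ K, ‖w - v‖ ≤ D) {proj : H → H} (hmem : ∀ v, proj v ∈ K)
    (hmin : ∀ v, ∀ u ∈ K, ‖v - proj v‖ ≤ ‖v - u‖) {G v : ℕ → H} (hvK : ∀ t, 1 ≤ t → v t ∈ K)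
    (hpos : ∀ t, 1 ≤ t → 0 < √(cumSqNorm G t) →
      v (t + 1) = proj (v t - (D / (√2 * √(cumSqNorm G t))) • G t))
    {u : H} (hu : u ∈ K) (T : ℕ) :
    ∑ t ∈ Icc 1 T, ⟪G t, v t - u⟫ ≤ √2 * D * √(cumSqNorm G T) := by
  rcases ((norm_nonneg _).trans (hdiam u hu u hu)).eq_or_lt with rfl | hD
  · have hvu : ∀ t ∈ Icc 1 T, v t - u = 0 := fun t ht =>
      norm_le_zero_iff.1 (hdiam _ (hvK t (mem_Icc.1 ht).1) u hu)
    simp [sum_congr rfl fun t ht => congrArg (inner ℝ (G t)) (hvu t ht)]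
  have htelescope := sum_Icc_le_of_le_mul_sub_add (a := fun t => ⟪G t, v t - u⟫)
    (c := fun t => √(cumSqNorm G t) / (√2 * D)) (d := fun t => ‖v t - u‖ ^ 2)
    (b := fun t => D / (2 * √2) * (‖G t‖ ^ 2 / √(cumSqNorm G t))) (C := D ^ 2)
    (fun t => by positivity)
    (fun s t h => div_le_div_of_nonneg_right (Real.sqrt_le_sqrt (cumSqNorm_mono G h))
      (by positivity))
    (fun t => sq_nonneg _)
    (fun t ht => pow_le_pow_left₀ (norm_nonneg _) (hdiam _ (hvK t ht) u hu) 2)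
    (fun t ht => adaGradNorm_step_inner_le hD (fun y => norm_nearest_sub_le hK (hmem y) (hmin y) hu)
      (sq_norm_le_cumSqNorm G ht) (hpos t ht)) T
  have hsum : ∑ t ∈ Icc 1 T, ‖G t‖ ^ 2 / √(cumSqNorm G t) ≤ 2 * √(cumSqNorm G T) :=
    sum_div_sqrt_partialSum_le (fun _ => sq_nonneg _) T
  calc ∑ t ∈ Icc 1 T, ⟪G t, v t - u⟫
      ≤ √(cumSqNorm G T) / (√2 * D) * D ^ 2
        + D / (2 * √2) * ∑ t ∈ Icc 1 T, ‖G t‖ ^ 2 / √(cumSqNorm G t) := by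
        rwa [mul_sum]
    _ ≤ √(cumSqNorm G T) / (√2 * D) * D ^ 2 + D / (2 * √2) * (2 * √(cumSqNorm G T)) := by
        gcongr
    _ = √2 * D * √(cumSqNorm G T) := by
        field_simp
        rw [Real.sq_sqrt zero_le_two]
        ring

end AdaGradNorm

section Iterates

variable {H : Type*} [NormedAddCommGroup H] [InnerProductSpace ℝ H] {proj : H → H} {D : ℝ}

theorem adaGradNorm_iterate_mem {K : Set H} (hmem : ∀ v, proj v ∈ K) {G v : ℕ → H}
    (hv1 : v 1 ∈ K)
    (hpos : ∀ t, 1 ≤ t → 0 < √(cumSqNorm G t) →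
      v (t + 1) = proj (v t - (D / (√2 * √(cumSqNorm G t))) • G t))
    (hzero : ∀ t, 1 ≤ t → √(cumSqNorm G t) = 0 → v (t + 1) = v t) :
    ∀ t, 1 ≤ t → v t ∈ K := by
  refine Nat.le_induction hv1 fun t ht hvt => ?_
  rcases (Real.sqrt_nonneg (cumSqNorm G t)).eq_or_lt with hS | hS
  · rwa [hzero t ht hS.symm]
  · rw [hpos t ht hS]; exact hmem _

theorem stronglyMeasurable_adaGradNorm_iterate {Ω : Type*} {mΩ : MeasurableSpace Ω}
    {𝓕 : Filtration ℕ mΩ} (hproj : Continuous proj) {G w : ℕ → Ω → H} {w₁ : H} {T : ℕ}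
    (hw1 : ∀ ω, w 1 ω = w₁) (hG : ∀ t ∈ Icc 1 T, StronglyMeasurable[𝓕 t] (G t))
    (hpos : ∀ t, 1 ≤ t → ∀ ω, 0 < √(cumSqNorm (G · ω) t) →
      w (t + 1) ω = proj (w t ω - (D / (√2 * √(cumSqNorm (G · ω) t))) • G t ω))
    (hzero : ∀ t, 1 ≤ t → ∀ ω, √(cumSqNorm (G · ω) t) = 0 → w (t + 1) ω = w t ω) :
    ∀ t ∈ Icc 1 T, StronglyMeasurable[𝓕 (t - 1)] (w t) := by
  suffices h : ∀ s < T, StronglyMeasurable[𝓕 s] (w (s + 1)) by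
    intro t ht
    obtain ⟨s, rfl⟩ := Nat.exists_eq_add_of_le' (mem_Icc.1 ht).1
    exact h s (by simpa using (mem_Icc.1 ht).2)
  intro s
  induction s with
  | zero => exact fun _ => (funext hw1 : w 1 = fun _ => w₁) ▸ stronglyMeasurable_const
  | succ s ih =>
    intro hs
    have hGs : ∀ τ ∈ Icc 1 (s + 1), StronglyMeasurable[𝓕 (s + 1)] (G τ) := fun τ hτ =>
      (hG τ (mem_Icc.2 ⟨(mem_Icc.1 hτ).1, by linarith [(mem_Icc.1 hτ).2]⟩)).mono
        (𝓕.mono (mem_Icc.1 hτ).2)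
    have hS : Measurable[𝓕 (s + 1)] fun ω => √(cumSqNorm (G · ω) (s + 1)) :=
      (Finset.measurable_sum _ fun τ hτ => (hGs τ hτ).norm.measurable.pow_const 2).sqrt
    have hw : StronglyMeasurable[𝓕 (s + 1)] (w (s + 1)) :=
      (ih (by omega)).mono (𝓕.mono s.le_succ)
    have hstep : w (s + 1 + 1) = fun ω => if 0 < √(cumSqNorm (G · ω) (s + 1))
        then proj (w (s + 1) ω - (D / (√2 * √(cumSqNorm (G · ω) (s + 1)))) • G (s + 1) ω)
        else w (s + 1) ω := by
      funext ω
      split_ifs with h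
      · exact hpos _ s.succ_pos ω h
      · exact hzero _ s.succ_pos ω (le_antisymm (not_lt.1 h) (Real.sqrt_nonneg _))
    rw [hstep]
    refine StronglyMeasurable.ite (measurableSet_lt measurable_const hS) ?_ hw
    exact hproj.comp_stronglyMeasurable <| hw.sub <|
      (measurable_const.div (hS.const_mul _)).stronglyMeasurable.smul
        (hGs _ (mem_Icc.2 ⟨s.succ_pos, le_rfl⟩))

end Iterates

section SecondMoments

variable {Ω : Type*} {m m0 : MeasurableSpace Ω} {μ : Measure Ω}
  {H : Type*} [NormedAddCommGroup H] [InnerProductSpace ℝ H]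

theorem MeasureTheory.MemLp.integrable_inner {f g : Ω → H} (hf : MemLp f 2 μ)
    (hg : MemLp g 2 μ) : Integrable (fun ω => ⟪f ω, g ω⟫) μ :=
  (hf.norm.integrable_mul hg.norm).mono' (hf.1.inner hg.1)
    (ae_of_all _ fun _ => norm_inner_le_norm _ _)

theorem MeasureTheory.MemLp.inner_of_norm_le {f g : Ω → H} {D : ℝ} (hf : MemLp f 2 μ)
    (hg : AEStronglyMeasurable g μ) (hgD : ∀ ω, ‖g ω‖ ≤ D) : MemLp (fun ω => ⟪f ω, g ω⟫) 2 μ :=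
  hf.of_le_mul (hf.1.inner hg) <| ae_of_all _ fun ω =>
    (norm_inner_le_norm _ _).trans <| by nlinarith [hgD ω, norm_nonneg (f ω), norm_nonneg (g ω)]

theorem MeasureTheory.MemLp.smul_of_norm_le {f : Ω → ℝ} {g : Ω → H} {D : ℝ} (hf : MemLp f 2 μ)
    (hg : AEStronglyMeasurable g μ) (hgD : ∀ ω, ‖g ω‖ ≤ D) : MemLp (fun ω => f ω • g ω) 2 μ :=
  hf.of_le_mul (hf.1.smul hg) <| ae_of_all _ fun ω => by
    rw [norm_smul]; nlinarith [hgD ω, norm_nonneg (f ω), norm_nonneg (g ω)]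

theorem integral_inner_condExp [CompleteSpace H] [IsFiniteMeasure μ] (hm : m ≤ m0)
    {f Z : Ω → H} (hf : MemLp f 2 μ) (hZ : MemLp Z 2 μ) (hZm : AEStronglyMeasurable[m] Z μ) :
    ∫ ω, ⟪(μ[f | m]) ω, Z ω⟫ ∂μ = ∫ ω, ⟪f ω, Z ω⟫ ∂μ := by
  calc ∫ ω, ⟪(μ[f | m]) ω, Z ω⟫ ∂μ
      = ⟪(condExpL2 H ℝ hm (hf.toLp f) : Lp H 2 μ), hZ.toLp Z⟫ := by
        rw [L2.inner_def]
        refine integral_congr_ae ?_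
        filter_upwards [hf.condExpL2_ae_eq_condExp (𝕜 := ℝ) hm, hZ.coeFn_toLp] with ω h1 h2
        rw [h1, h2]
    _ = ⟪hf.toLp f, hZ.toLp Z⟫ := inner_condExpL2_eq_inner_fun hm _ _
        (hZm.congr hZ.coeFn_toLp.symm)
    _ = ∫ ω, ⟪f ω, Z ω⟫ ∂μ := by
        rw [L2.inner_def]
        refine integral_congr_ae ?_
        filter_upwards [hf.coeFn_toLp, hZ.coeFn_toLp] with ω h1 h2
        rw [h1, h2]

theorem integral_inner_eq_zero_of_condExp_eq_zero [CompleteSpace H] [IsFiniteMeasure μ]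
    (hm : m ≤ m0) {ξ Z : Ω → H} (hξ : MemLp ξ 2 μ) (hξ0 : μ[ξ | m] =ᵐ[μ] 0) (hZ : MemLp Z 2 μ)
    (hZm : AEStronglyMeasurable[m] Z μ) : ∫ ω, ⟪ξ ω, Z ω⟫ ∂μ = 0 := by
  rw [← integral_inner_condExp hm hξ hZ hZm]
  refine integral_eq_zero_of_ae ?_
  filter_upwards [hξ0] with ω hω
  simp [hω]

theorem condExp_sub_ae_eq_zero [CompleteSpace H] (hm : m ≤ m0) [SigmaFinite (μ.trim hm)]
    {f g : Ω → H} (hf : Integrable f μ) (hgi : Integrable g μ) (hgm : StronglyMeasurable[m] g)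
    (hfg : μ[f | m] =ᵐ[μ] g) : μ[f - g | m] =ᵐ[μ] 0 := by
  filter_upwards [condExp_sub hf hgi m, hfg] with ω h1 h2
  simp [h1, h2, condExp_of_stronglyMeasurable hm hgm hgi]

theorem integral_norm_sq_eq_add_of_condExp_ae_eq [CompleteSpace H] [IsFiniteMeasure μ]
    (hm : m ≤ m0) {f g : Ω → H} (hf : MemLp f 2 μ) (hgm : StronglyMeasurable[m] g)
    (hfg : μ[f | m] =ᵐ[μ] g) :
    ∫ ω, ‖f ω‖ ^ 2 ∂μ = ∫ ω, ‖g ω‖ ^ 2 ∂μ + ∫ ω, ‖f ω - g ω‖ ^ 2 ∂μ := by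
  have hg : MemLp g 2 μ := (hf.condExp one_le_two).ae_eq hfg
  have hξ : MemLp (fun ω => f ω - g ω) 2 μ := hf.sub hg
  have hcross : ∫ ω, ⟪f ω - g ω, g ω⟫ ∂μ = 0 :=
    integral_inner_eq_zero_of_condExp_eq_zero hm hξ
      (condExp_sub_ae_eq_zero hm (hf.integrable one_le_two) (hg.integrable one_le_two) hgm hfg)
      hg hgm.aestronglyMeasurable
  have hcross_int : Integrable (fun ω => 2 * ⟪g ω, f ω - g ω⟫) μ :=
    (hg.integrable_inner hξ).const_mul 2
  have hint : Integrable (fun ω => ‖g ω‖ ^ 2 + 2 * ⟪g ω, f ω - g ω⟫) μ :=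
    hg.norm.integrable_sq.add hcross_int
  calc ∫ ω, ‖f ω‖ ^ 2 ∂μ = ∫ ω, ‖g ω + (f ω - g ω)‖ ^ 2 ∂μ := by simp_rw [add_sub_cancel]
    _ = ∫ ω, ‖g ω‖ ^ 2 ∂μ + ∫ ω, ‖f ω - g ω‖ ^ 2 ∂μ := by
      simp_rw [norm_add_sq_real]
      rw [integral_add hint hξ.norm.integrable_sq,
        integral_add hg.norm.integrable_sq hcross_int, integral_const_mul,
        funext fun ω => real_inner_comm (f ω - g ω) (g ω), hcross]
      ring

theorem integral_sq_sum_of_orthogonal {ι : Type*} {I : Finset ι} {X : ι → Ω → ℝ}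
    (hX : ∀ i ∈ I, MemLp (X i) 2 μ) (horth : ∀ i ∈ I, ∀ j ∈ I, i ≠ j → ∫ ω, X i ω * X j ω ∂μ = 0) :
    ∫ ω, (∑ i ∈ I, X i ω) ^ 2 ∂μ = ∑ i ∈ I, ∫ ω, X i ω ^ 2 ∂μ := by
  have hint : ∀ i ∈ I, ∀ j ∈ I, Integrable (fun ω => X i ω * X j ω) μ := fun i hi j hj =>
    (hX i hi).integrable_mul (hX j hj)
  simp_rw [sq, sum_mul_sum]
  rw [integral_finsetSum _ fun i hi => integrable_finsetSum _ (hint i hi)]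
  refine sum_congr rfl fun i hi => ?_
  rw [integral_finsetSum _ (hint i hi)]
  exact sum_eq_single_of_mem i hi fun j hj hji => horth i hi j hj hji.symm

theorem integral_sq_sum_inner_le [CompleteSpace H] [IsFiniteMeasure μ] {𝓕 : Filtration ℕ m0}
    {I : Finset ℕ} {ξ Z : ℕ → Ω → H} {D : ℝ} (hξ : ∀ t ∈ I, MemLp (ξ t) 2 μ)
    (hξm : ∀ t ∈ I, StronglyMeasurable[𝓕 t] (ξ t)) (hξ0 : ∀ t ∈ I, μ[ξ t | 𝓕 (t - 1)] =ᵐ[μ] 0)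
    (hZm : ∀ t ∈ I, StronglyMeasurable[𝓕 (t - 1)] (Z t)) (hZ : ∀ t ∈ I, ∀ ω, ‖Z t ω‖ ≤ D) :
    ∫ ω, (∑ t ∈ I, ⟪ξ t ω, Z t ω⟫) ^ 2 ∂μ ≤ D ^ 2 * ∑ t ∈ I, ∫ ω, ‖ξ t ω‖ ^ 2 ∂μ := by
  set X : ℕ → Ω → ℝ := fun t ω => ⟪ξ t ω, Z t ω⟫
  have hZm' : ∀ t ∈ I, AEStronglyMeasurable (Z t) μ := fun t ht =>
    ((hZm t ht).mono (𝓕.le _)).aestronglyMeasurable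
  have hX : ∀ t ∈ I, MemLp (X t) 2 μ := fun t ht =>
    (hξ t ht).inner_of_norm_le (hZm' t ht) (hZ t ht)
  have horth : ∀ s ∈ I, ∀ t ∈ I, s < t → ∫ ω, X s ω * X t ω ∂μ = 0 := by
    intro s hs t ht hst
    -- `X s • Z t` is `𝓕 (t - 1)`-measurable, so it is orthogonal to the centred `ξ t`.
    have hXs : StronglyMeasurable[𝓕 (t - 1)] (X s) :=
      ((hξm s hs).inner ((hZm s hs).mono (𝓕.mono (Nat.sub_le s 1)))).mono (𝓕.mono (by omega))
    have h := integral_inner_eq_zero_of_condExp_eq_zero (𝓕.le (t - 1)) (hξ t ht) (hξ0 t ht)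
      ((hX s hs).smul_of_norm_le (hZm' t ht) (hZ t ht)) (hXs.smul (hZm t ht)).aestronglyMeasurable
    simpa only [real_inner_smul_right, mul_comm (X s _)] using h
  rw [integral_sq_sum_of_orthogonal hX fun s hs t ht hst => hst.lt_or_gt.elim (horth s hs t ht)
    fun h => by simpa only [mul_comm] using horth t ht s hs h, mul_sum]
  gcongr with t ht
  rw [← integral_const_mul]
  refine integral_mono (hX t ht).integrable_sq ((hξ t ht).norm.integrable_sq.const_mul _)
    fun ω => ?_
  have hXt : |X t ω| ≤ D * ‖ξ t ω‖ := (abs_real_inner_le_norm _ _).trans <| by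
    nlinarith [hZ t ht ω, norm_nonneg (ξ t ω)]
  calc X t ω ^ 2 = |X t ω| ^ 2 := (sq_abs _).symm
    _ ≤ (D * ‖ξ t ω‖) ^ 2 := pow_le_pow_left₀ (abs_nonneg _) hXt 2
    _ = D ^ 2 * ‖ξ t ω‖ ^ 2 := by ring

theorem integral_sq_le_of_le_mul_sqrt_add {R S Y : Ω → ℝ} {c : ℝ} (hR : 0 ≤ᵐ[μ] R)
    (hle : ∀ᵐ ω ∂μ, R ω ≤ c * √(S ω) + Y ω) (hS0 : ∀ ω, 0 ≤ S ω) (hS : Integrable S μ)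
    (hY : MemLp Y 2 μ) :
    ∫ ω, R ω ^ 2 ∂μ ≤ 2 * c ^ 2 * ∫ ω, S ω ∂μ + 2 * ∫ ω, Y ω ^ 2 ∂μ := by
  rw [← integral_const_mul, ← integral_const_mul,
    ← integral_add (hS.const_mul _) (hY.integrable_sq.const_mul 2)]
  refine integral_mono_of_nonneg (ae_of_all _ fun ω => sq_nonneg _)
    ((hS.const_mul _).add (hY.integrable_sq.const_mul 2)) ?_
  filter_upwards [hR, hle] with ω (h0 : 0 ≤ R ω) h
  have hsq : (c * √(S ω)) ^ 2 = c ^ 2 * S ω := by rw [mul_pow, Real.sq_sqrt (hS0 ω)]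
  nlinarith [mul_self_le_mul_self h0 h, sq_nonneg (c * √(S ω) - Y ω)]

end SecondMoments

section UnbiasedEstimates

variable {Ω : Type*} {m0 : MeasurableSpace Ω} {μ : Measure Ω}
  {H : Type*} [NormedAddCommGroup H] [InnerProductSpace ℝ H] [CompleteSpace H]
  {𝓕 : Filtration ℕ m0} {I : Finset ℕ} {f g : ℕ → Ω → H}

theorem integral_sum_sq_norm_eq_add_of_condExp_ae_eq [IsFiniteMeasure μ]
    (hf : ∀ t ∈ I, MemLp (f t) 2 μ)
    (hgm : ∀ t ∈ I, StronglyMeasurable[𝓕 (t - 1)] (g t))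
    (hfg : ∀ t ∈ I, μ[f t | 𝓕 (t - 1)] =ᵐ[μ] g t) :
    ∫ ω, ∑ t ∈ I, ‖f t ω‖ ^ 2 ∂μ
      = ∫ ω, ∑ t ∈ I, ‖g t ω‖ ^ 2 ∂μ + ∫ ω, ∑ t ∈ I, ‖f t ω - g t ω‖ ^ 2 ∂μ := by
  have hg : ∀ t ∈ I, MemLp (g t) 2 μ := fun t ht => ((hf t ht).condExp one_le_two).ae_eq (hfg t ht)
  have hξ : ∀ t ∈ I, MemLp (fun ω => f t ω - g t ω) 2 μ := fun t ht => (hf t ht).sub (hg t ht)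
  rw [integral_finsetSum _ fun t ht => (hf t ht).norm.integrable_sq,
    integral_finsetSum _ fun t ht => (hg t ht).norm.integrable_sq,
    integral_finsetSum _ fun t ht => (hξ t ht).norm.integrable_sq,
    ← sum_add_distrib]
  exact sum_congr rfl fun t ht =>
    integral_norm_sq_eq_add_of_condExp_ae_eq (𝓕.le _) (hf t ht) (hgm t ht) (hfg t ht)

theorem integral_sq_le_of_le_mul_sqrt_sub_sum_inner [IsFiniteMeasure μ] {Z : ℕ → Ω → H}
    {R S : Ω → ℝ} {c D : ℝ}
    (hf : ∀ t ∈ I, MemLp (f t) 2 μ) (hfm : ∀ t ∈ I, StronglyMeasurable[𝓕 t] (f t))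
    (hgm : ∀ t ∈ I, StronglyMeasurable[𝓕 (t - 1)] (g t))
    (hfg : ∀ t ∈ I, μ[f t | 𝓕 (t - 1)] =ᵐ[μ] g t)
    (hZm : ∀ t ∈ I, StronglyMeasurable[𝓕 (t - 1)] (Z t)) (hZ : ∀ t ∈ I, ∀ ω, ‖Z t ω‖ ≤ D)
    (hS0 : ∀ ω, 0 ≤ S ω) (hS : Integrable S μ) (hR0 : 0 ≤ᵐ[μ] R)
    (hR : ∀ᵐ ω ∂μ, R ω ≤ c * √(S ω) - ∑ t ∈ I, ⟪f t ω - g t ω, Z t ω⟫) :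
    ∫ ω, R ω ^ 2 ∂μ
      ≤ 2 * c ^ 2 * ∫ ω, S ω ∂μ + 2 * D ^ 2 * ∫ ω, ∑ t ∈ I, ‖f t ω - g t ω‖ ^ 2 ∂μ := by
  have hg : ∀ t ∈ I, MemLp (g t) 2 μ := fun t ht => ((hf t ht).condExp one_le_two).ae_eq (hfg t ht)
  have hξ : ∀ t ∈ I, MemLp (fun ω => f t ω - g t ω) 2 μ := fun t ht => (hf t ht).sub (hg t ht)
  have hM : MemLp (fun ω => -∑ t ∈ I, ⟪f t ω - g t ω, Z t ω⟫) 2 μ := MemLp.neg <|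
    memLp_finsetSum _ fun t ht =>
      (hξ t ht).inner_of_norm_le ((hZm t ht).mono (𝓕.le _)).aestronglyMeasurable (hZ t ht)
  have hM_sq := integral_sq_sum_inner_le (𝓕 := 𝓕) hξ
    (fun t ht => (hfm t ht).sub ((hgm t ht).mono (𝓕.mono (Nat.sub_le t 1))))
    (fun t ht => condExp_sub_ae_eq_zero (𝓕.le _) ((hf t ht).integrable one_le_two)
      ((hg t ht).integrable one_le_two) (hgm t ht) (hfg t ht))
    hZm hZ
  have h := integral_sq_le_of_le_mul_sqrt_add hR0 (by simpa only [sub_eq_add_neg] using hR)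
    hS0 hS hM
  rw [integral_finsetSum _ fun t ht => (hξ t ht).norm.integrable_sq]
  simp only [neg_sq] at h
  linarith

theorem integral_sum_mul_sq_norm_add_mul_sq_norm_sub (hf : ∀ t ∈ I, MemLp (f t) 2 μ)
    (hfg : ∀ t ∈ I, μ[f t | 𝓕 (t - 1)] =ᵐ[μ] g t) (a b : ℝ) :
    ∫ ω, ∑ t ∈ I, (a * ‖g t ω‖ ^ 2 + b * ‖f t ω - g t ω‖ ^ 2) ∂μ
      = a * ∫ ω, ∑ t ∈ I, ‖g t ω‖ ^ 2 ∂μ + b * ∫ ω, ∑ t ∈ I, ‖f t ω - g t ω‖ ^ 2 ∂μ := by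
  have hg : ∀ t ∈ I, MemLp (g t) 2 μ := fun t ht =>
    ((hf t ht).condExp one_le_two).ae_eq (hfg t ht)
  have hg_int : Integrable (fun ω => ∑ t ∈ I, ‖g t ω‖ ^ 2) μ :=
    integrable_finsetSum _ fun t ht => (hg t ht).norm.integrable_sq
  have hξ_int : Integrable (fun ω => ∑ t ∈ I, ‖f t ω - g t ω‖ ^ 2) μ :=
    integrable_finsetSum _ fun t ht => ((hf t ht).sub (hg t ht)).norm.integrable_sq
  simp_rw [sum_add_distrib, ← mul_sum]
  rw [integral_add (hg_int.const_mul a) (hξ_int.const_mul b), integral_const_mul,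
    integral_const_mul]

end UnbiasedEstimates

theorem stmt7_general
    {Ω : Type*} {mΩ : MeasurableSpace Ω} {μ : Measure Ω} [IsProbabilityMeasure μ]
    (𝓕 : Filtration ℕ mΩ)
    {H : Type*} [NormedAddCommGroup H] [InnerProductSpace ℝ H] [CompleteSpace H]
    (K : Set H) (hKconvex : Convex ℝ K)
    (D : ℝ) (hD : ∀ w ∈ K, ∀ v ∈ K, ‖w - v‖ ≤ D)
    (proj : H → H)
    (hproj_mem : ∀ v, proj v ∈ K)
    (hproj_min : ∀ v, ∀ u ∈ K, ‖v - proj v‖ ≤ ‖v - u‖)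
    (T : ℕ) (g gtld γ : ℕ → Ω → H)
    (hgtld_sq : ∀ t ∈ Icc 1 T, MemLp (gtld t) 2 μ)
    (hgtld_meas : ∀ t ∈ Icc 1 T, StronglyMeasurable[𝓕 t] (gtld t))
    (hg_meas : ∀ t ∈ Icc 1 T, StronglyMeasurable[𝓕 (t - 1)] (g t))
    (hunbiased : ∀ t ∈ Icc 1 T, μ[gtld t | 𝓕 (t - 1)] =ᵐ[μ] g t)
    (hγ : ∀ t ω, γ t ω = gtld t ω - g t ω)
    (w : ℕ → Ω → H) (w₁ : H) (hw₁K : w₁ ∈ K) (hw1 : ∀ ω, w 1 ω = w₁)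
    (hiter_pos : ∀ t, 1 ≤ t → ∀ ω,
      0 < Real.sqrt (∑ τ ∈ Icc 1 t, ‖gtld τ ω‖ ^ 2) →
      w (t + 1) ω = proj (w t ω -
        (D / (Real.sqrt 2 * Real.sqrt (∑ τ ∈ Icc 1 t, ‖gtld τ ω‖ ^ 2))) • gtld t ω))
    (hiter_zero : ∀ t, 1 ≤ t → ∀ ω,
      Real.sqrt (∑ τ ∈ Icc 1 t, ‖gtld τ ω‖ ^ 2) = 0 → w (t + 1) ω = w t ω)
    (wstar : H) (hwstar : wstar ∈ K)
    (R : Ω → ℝ)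
    (hRnonneg : ∀ᵐ ω ∂μ, 0 ≤ R ω)
    (hRle : ∀ᵐ ω ∂μ, R ω ≤ ∑ t ∈ Icc 1 T, ⟪g t ω, w t ω - wstar⟫) :
    (∫ ω, R ω ^ 2 ∂μ) ≤
        D ^ 2 * ∫ ω, (∑ t ∈ Icc 1 T, (4 * ‖g t ω‖ ^ 2 + 6 * ‖γ t ω‖ ^ 2)) ∂μ ∧
      D ^ 2 * (∫ ω, (∑ t ∈ Icc 1 T, (4 * ‖g t ω‖ ^ 2 + 6 * ‖γ t ω‖ ^ 2)) ∂μ) ≤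
        6 * D ^ 2 * ∫ ω, (∑ t ∈ Icc 1 T, ‖gtld t ω‖ ^ 2) ∂μ := by
  simp only [hγ]
  have hwK : ∀ t, 1 ≤ t → ∀ ω, w t ω ∈ K := fun t ht ω =>
    adaGradNorm_iterate_mem (G := (gtld · ω)) (v := (w · ω)) hproj_mem
      ((hw1 ω).symm ▸ hw₁K) (fun t ht => hiter_pos t ht ω) (fun t ht => hiter_zero t ht ω) t ht
  have hw_meas := stronglyMeasurable_adaGradNorm_iterate
    (lipschitzWith_one_of_nearest hKconvex hproj_mem hproj_min).continuous hw1 hgtld_meas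
    hiter_pos hiter_zero
  have hR : ∀ᵐ ω ∂μ, R ω ≤ √2 * D * √(cumSqNorm (gtld · ω) T)
      - ∑ t ∈ Icc 1 T, ⟪gtld t ω - g t ω, w t ω - wstar⟫ := by
    filter_upwards [hRle] with ω h
    have := adaGradNorm_regret_le (G := (gtld · ω)) hKconvex hD hproj_mem hproj_min
      (fun t ht => hwK t ht ω) (fun t ht => hiter_pos t ht ω) hwstar T
    simp only [inner_sub_left, sum_sub_distrib] at h ⊢
    linarith
  have hR_sq := integral_sq_le_of_le_mul_sqrt_sub_sum_inner hgtld_sq hgtld_meas hg_meas hunbiased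
    (fun t ht => (hw_meas t ht).sub stronglyMeasurable_const)
    (fun t ht ω => hD _ (hwK t (mem_Icc.1 ht).1 ω) _ hwstar) (fun ω => cumSqNorm_nonneg _ _)
    (integrable_finsetSum _ fun t ht => (hgtld_sq t ht).norm.integrable_sq) hRnonneg hR
  have hsplit := integral_sum_sq_norm_eq_add_of_condExp_ae_eq hgtld_sq hg_meas hunbiased
  unfold cumSqNorm at hR_sq
  rw [hsplit, mul_pow, Real.sq_sqrt zero_le_two] at hR_sq
  rw [integral_sum_mul_sq_norm_add_mul_sq_norm_sub hgtld_sq hunbiased, hsplit]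
  have hA : 0 ≤ ∫ ω, ∑ t ∈ Icc 1 T, ‖g t ω‖ ^ 2 ∂μ :=
    integral_nonneg fun ω => sum_nonneg fun t _ => sq_nonneg _
  constructor <;> nlinarith [sq_nonneg D]

/-- second-moment regret guarantee for adaptive projected descent
driven by unbiased noisy sub-gradient observations. -/
theorem stmt7
    {Ω : Type*} {mΩ : MeasurableSpace Ω} {μ : Measure Ω} [IsProbabilityMeasure μ]
    (𝓕 : Filtration ℕ mΩ)
    {H : Type*} [NormedAddCommGroup H] [InnerProductSpace ℝ H] [CompleteSpace H]
    (K : Set H) (hKne : K.Nonempty) (hKclosed : IsClosed K) (hKconvex : Convex ℝ K)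
    (D : ℝ) (hD : ∀ w ∈ K, ∀ v ∈ K, ‖w - v‖ ≤ D)
    (proj : H → H)
    (hproj_mem : ∀ v, proj v ∈ K)
    (hproj_min : ∀ v, ∀ u ∈ K, ‖v - proj v‖ ≤ ‖v - u‖)
    (T : ℕ) (g gtld γ : ℕ → Ω → H)
    (hgtld_sq : ∀ t ∈ Icc 1 T, MemLp (gtld t) 2 μ)
    (hgtld_meas : ∀ t ∈ Icc 1 T, StronglyMeasurable[𝓕 t] (gtld t))
    (hg_meas : ∀ t ∈ Icc 1 T, StronglyMeasurable[𝓕 (t - 1)] (g t))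
    (hunbiased : ∀ t ∈ Icc 1 T, μ[gtld t | 𝓕 (t - 1)] =ᵐ[μ] g t)
    (hγ : ∀ t ω, γ t ω = gtld t ω - g t ω)
    (w : ℕ → Ω → H) (w₁ : H) (hw₁K : w₁ ∈ K) (hw1 : ∀ ω, w 1 ω = w₁)
    (hiter_pos : ∀ t, 1 ≤ t → ∀ ω,
      0 < Real.sqrt (∑ τ ∈ Icc 1 t, ‖gtld τ ω‖ ^ 2) →
      w (t + 1) ω = proj (w t ω -
        (D / (Real.sqrt 2 * Real.sqrt (∑ τ ∈ Icc 1 t, ‖gtld τ ω‖ ^ 2))) • gtld t ω))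
    (hiter_zero : ∀ t, 1 ≤ t → ∀ ω,
      Real.sqrt (∑ τ ∈ Icc 1 t, ‖gtld τ ω‖ ^ 2) = 0 → w (t + 1) ω = w t ω)
    (wstar : H) (hwstar : wstar ∈ K)
    (R : Ω → ℝ) (hRmeas : Measurable R)
    (hRnonneg : ∀ᵐ ω ∂μ, 0 ≤ R ω)
    (hRle : ∀ᵐ ω ∂μ, R ω ≤ ∑ t ∈ Icc 1 T, ⟪g t ω, w t ω - wstar⟫) :
    (∫ ω, R ω ^ 2 ∂μ) ≤
        D ^ 2 * ∫ ω, (∑ t ∈ Icc 1 T, (4 * ‖g t ω‖ ^ 2 + 6 * ‖γ t ω‖ ^ 2)) ∂μ ∧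
      D ^ 2 * (∫ ω, (∑ t ∈ Icc 1 T, (4 * ‖g t ω‖ ^ 2 + 6 * ‖γ t ω‖ ^ 2)) ∂μ) ≤
        6 * D ^ 2 * ∫ ω, (∑ t ∈ Icc 1 T, ‖gtld t ω‖ ^ 2) ∂μ :=
  stmt7_general 𝓕 K hKconvex D hD proj hproj_mem hproj_min T g gtld γ hgtld_sq hgtld_meas hg_meas
    hunbiased hγ w w₁ hw₁K hw1 hiter_pos hiter_zero wstar hwstar R hRnonneg hRle
end

section
/- Let w_1 ∈ K, let (g̃_t)_{t≥1} be arbitrary vectors of H, and define the iterates w_{t+1} = Π_K(w_t − η_t g̃_t) with η_t = D/(√2 · √(∑_{τ=1}^t ‖g̃_τ‖²)) whenever the denominator is positive, and w_{t+1} = w_t whenever it is zero. Then for every w* ∈ K and every T ≥ 1, ∑_{t=1}^T ⟨g̃_t, w_t − w*⟩ ≤ √2 · D · √(∑_{t=1}^T ‖g̃_t‖²). -/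
open Finset
open scoped RealInnerProductSpace

/-! Since `K` is convex, projecting onto it does not increase the distance to `w* ∈ K`; expanding
`‖w_t - η_t g̃_t - w*‖²` then gives, whenever `η_t > 0`,
`⟪g̃_t, w_t - w*⟫ ≤ (‖w_t - w*‖² - ‖w_{t+1} - w*‖²) / (2 η_t) + η_t ‖g̃_t‖² / 2`.
Because `1 / η_t = √2 √S_t / D` is nondecreasing and all distances are at most `D`, Abel summation
bounds the first terms by `D² / (2 η_T) = D √S_T / √2`, where `S_t = ∑_{τ ≤ t} ‖g̃_τ‖²`. The
second terms sum to `(D / (2√2)) ∑ ‖g̃_t‖² / √S_t ≤ D √S_T / √2`, by telescoping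
`b / √(B + b) ≤ 2 (√(B + b) - √B)`. A step with `η_t = 0` contributes nothing: then `D = 0`, so
`K` is a point, or `g̃_t = 0`. -/

theorem div_sqrt_add_le_two_mul_sub_sqrt_s19 {B b : ℝ} (hB : 0 ≤ B) (hb : 0 ≤ b) :
    b / √(B + b) ≤ 2 * (√(B + b) - √B) := by
  have hx : √(B + b) ^ 2 = B + b := Real.sq_sqrt (by linarith)
  have hy : √B ^ 2 = B := Real.sq_sqrt hB
  have hyx : √B ≤ √(B + b) := Real.sqrt_le_sqrt (by linarith)
  rcases (Real.sqrt_nonneg (B + b)).eq_or_lt with hx0 | hx0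
  · rw [← hx0, div_zero]
    linarith [Real.sqrt_nonneg B]
  · rw [div_le_iff₀ hx0]
    nlinarith

theorem sum_Icc_div_sqrt_sum_Icc_le {b : ℕ → ℝ} (hb : ∀ t, 0 ≤ b t) (T : ℕ) :
    ∑ t ∈ Icc 1 T, b t / √(∑ τ ∈ Icc 1 t, b τ) ≤ 2 * √(∑ t ∈ Icc 1 T, b t) := by
  induction T with
  | zero => simp
  | succ T ih =>
    rw [sum_Icc_succ_top (Nat.le_add_left 1 T), sum_Icc_succ_top (Nat.le_add_left 1 T)]
    have := div_sqrt_add_le_two_mul_sub_sqrt_s19 (sum_nonneg fun t (_ : t ∈ Icc 1 T) => hb t)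
      (hb (T + 1))
    linarith

theorem sum_Icc_mul_sub_succ_le {c a : ℕ → ℝ} {M : ℝ} (hc : Monotone c) (hc0 : 0 ≤ c 0)
    (ha : ∀ t, 1 ≤ t → a t ≤ M) (T : ℕ) :
    ∑ t ∈ Icc 1 T, c t * (a t - a (t + 1)) ≤ c T * (M - a (T + 1)) := by
  induction T with
  | zero => simpa using mul_nonneg hc0 (sub_nonneg.2 (ha 1 le_rfl))
  | succ T ih =>
    rw [sum_Icc_succ_top (Nat.le_add_left 1 T)]
    have hcT := hc (Nat.le_succ T)
    have haT := ha (T + 1) (Nat.le_add_left 1 T)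
    nlinarith

section ConvexProjection

variable {H : Type*} [NormedAddCommGroup H] [InnerProductSpace ℝ H] {K : Set H} {proj : H → H}

theorem inner_sub_proj_le_zero (hK : Convex ℝ K) (hmem : ∀ v, proj v ∈ K)
    (hmin : ∀ v, ∀ u ∈ K, ‖v - proj v‖ ≤ ‖v - u‖) (v : H) {u : H} (hu : u ∈ K) :
    ⟪v - proj v, u - proj v⟫ ≤ 0 := by
  have : Nonempty K := ⟨⟨u, hu⟩⟩
  refine (norm_eq_iInf_iff_real_inner_le_zero hK (hmem v)).1 ?_ u hu
  exact le_antisymm (le_ciInf fun z => hmin v z z.2)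
    (ciInf_le ⟨0, by rintro _ ⟨z, rfl⟩; positivity⟩ (⟨proj v, hmem v⟩ : K))

theorem norm_proj_sub_sq_le (hK : Convex ℝ K) (hmem : ∀ v, proj v ∈ K)
    (hmin : ∀ v, ∀ u ∈ K, ‖v - proj v‖ ≤ ‖v - u‖) (v : H) {u : H} (hu : u ∈ K) :
    ‖proj v - u‖ ^ 2 ≤ ‖v - u‖ ^ 2 := by
  have hinner := inner_sub_proj_le_zero hK hmem hmin v hu
  have hsplit : v - u = (v - proj v) - (u - proj v) := by abel
  rw [hsplit, norm_sub_sq_real (v - proj v), norm_sub_rev u]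
  nlinarith [sq_nonneg ‖v - proj v‖]

theorem inner_le_of_proj_step (hK : Convex ℝ K) (hmem : ∀ v, proj v ∈ K)
    (hmin : ∀ v, ∀ u ∈ K, ‖v - proj v‖ ≤ ‖v - u‖) {η : ℝ} (hη : 0 < η) (w g : H) {u : H}
    (hu : u ∈ K) :
    ⟪g, w - u⟫ ≤ η⁻¹ * (‖w - u‖ ^ 2 - ‖proj (w - η • g) - u‖ ^ 2) / 2 + η * ‖g‖ ^ 2 / 2 := by
  have hproj := norm_proj_sub_sq_le hK hmem hmin (w - η • g) hu
  have hexpand : ‖w - η • g - u‖ ^ 2 = ‖w - u‖ ^ 2 - 2 * η * ⟪g, w - u⟫ + η ^ 2 * ‖g‖ ^ 2 := by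
    rw [sub_right_comm, norm_sub_sq_real, real_inner_smul_right, real_inner_comm, norm_smul,
      Real.norm_of_nonneg hη.le]
    ring
  rw [hexpand] at hproj
  have hscaled : η⁻¹ * (2 * η * ⟪g, w - u⟫ - η ^ 2 * ‖g‖ ^ 2)
      ≤ η⁻¹ * (‖w - u‖ ^ 2 - ‖proj (w - η • g) - u‖ ^ 2) :=
    mul_le_mul_of_nonneg_left (by linarith) (inv_nonneg.2 hη.le)
  have hcancel : η⁻¹ * (2 * η * ⟪g, w - u⟫ - η ^ 2 * ‖g‖ ^ 2) = 2 * ⟪g, w - u⟫ - η * ‖g‖ ^ 2 := by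
    field_simp
  linarith

end ConvexProjection

section AdaptiveStepSize

variable {E : Type*} [NormedAddCommGroup E] {D : ℝ} {g : ℕ → E}

noncomputable def adaptiveStepSize (D : ℝ) (g : ℕ → E) (t : ℕ) : ℝ :=
  D / (√2 * √(∑ τ ∈ Icc 1 t, ‖g τ‖ ^ 2))

theorem adaptiveStepSize_nonneg (hD : 0 ≤ D) (g : ℕ → E) (t : ℕ) :
    0 ≤ adaptiveStepSize D g t := by
  unfold adaptiveStepSize
  positivity

theorem sqrt_pos_of_adaptiveStepSize_pos {t : ℕ} (h : 0 < adaptiveStepSize D g t) :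
    0 < √(∑ τ ∈ Icc 1 t, ‖g τ‖ ^ 2) := by
  refine (Real.sqrt_nonneg _).lt_of_ne' fun h0 => ?_
  simp [adaptiveStepSize, h0] at h

theorem eq_zero_of_adaptiveStepSize_eq_zero {t : ℕ} (ht : 1 ≤ t)
    (h : adaptiveStepSize D g t = 0) : D = 0 ∨ g t = 0 := by
  refine (div_eq_zero_iff.1 h).imp id fun hS => ?_
  have hS : ∑ τ ∈ Icc 1 t, ‖g τ‖ ^ 2 ≤ 0 := Real.sqrt_eq_zero'.1 (by simpa using hS)
  have hg : ‖g t‖ ^ 2 ≤ ∑ τ ∈ Icc 1 t, ‖g τ‖ ^ 2 :=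
    single_le_sum (f := fun τ => ‖g τ‖ ^ 2) (fun _ _ => sq_nonneg _) (mem_Icc.2 ⟨ht, le_rfl⟩)
  exact norm_eq_zero.1 <| (pow_eq_zero_iff two_ne_zero).1 (by linarith [sq_nonneg ‖g t‖])

theorem monotone_inv_adaptiveStepSize (hD : 0 ≤ D) :
    Monotone fun t => (adaptiveStepSize D g t)⁻¹ := by
  intro s t hst
  simp only [adaptiveStepSize, inv_div]
  have : ∑ τ ∈ Icc 1 s, ‖g τ‖ ^ 2 ≤ ∑ τ ∈ Icc 1 t, ‖g τ‖ ^ 2 :=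
    sum_le_sum_of_subset_of_nonneg (Icc_subset_Icc_right hst) fun _ _ _ => sq_nonneg _
  gcongr

theorem sum_inv_adaptiveStepSize_mul_sub_le (hD : 0 ≤ D) {a : ℕ → ℝ} (ha₀ : ∀ t, 0 ≤ a t)
    (ha : ∀ t, 1 ≤ t → a t ≤ D ^ 2) (T : ℕ) :
    ∑ t ∈ Icc 1 T, (adaptiveStepSize D g t)⁻¹ * (a t - a (t + 1))
      ≤ √2 * √(∑ t ∈ Icc 1 T, ‖g t‖ ^ 2) * D := by
  have hc0 := inv_nonneg.2 (adaptiveStepSize_nonneg hD g 0)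
  calc ∑ t ∈ Icc 1 T, (adaptiveStepSize D g t)⁻¹ * (a t - a (t + 1))
      ≤ (adaptiveStepSize D g T)⁻¹ * (D ^ 2 - a (T + 1)) :=
        sum_Icc_mul_sub_succ_le (monotone_inv_adaptiveStepSize hD) hc0 ha T
    _ ≤ (adaptiveStepSize D g T)⁻¹ * D ^ 2 := by
        have := adaptiveStepSize_nonneg hD g T
        gcongr
        exact sub_le_self _ (ha₀ _)
    _ = √2 * √(∑ t ∈ Icc 1 T, ‖g t‖ ^ 2) * D := by
        rcases hD.eq_or_lt with h | h
        · simp [adaptiveStepSize, ← h]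
        · simp only [adaptiveStepSize, inv_div]
          field_simp

theorem sum_adaptiveStepSize_mul_sq_le (hD : 0 ≤ D) (T : ℕ) :
    ∑ t ∈ Icc 1 T, adaptiveStepSize D g t * ‖g t‖ ^ 2
      ≤ √2 * √(∑ t ∈ Icc 1 T, ‖g t‖ ^ 2) * D := by
  have h2 : √2 ^ 2 = 2 := Real.sq_sqrt zero_le_two
  calc ∑ t ∈ Icc 1 T, adaptiveStepSize D g t * ‖g t‖ ^ 2
      = D / √2 * ∑ t ∈ Icc 1 T, ‖g t‖ ^ 2 / √(∑ τ ∈ Icc 1 t, ‖g τ‖ ^ 2) := by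
        rw [mul_sum]
        refine sum_congr rfl fun t _ => ?_
        simp only [adaptiveStepSize]
        ring
    _ ≤ D / √2 * (2 * √(∑ t ∈ Icc 1 T, ‖g t‖ ^ 2)) := by
        gcongr
        exact sum_Icc_div_sqrt_sum_Icc_le (fun t => sq_nonneg _) T
    _ = √2 * √(∑ t ∈ Icc 1 T, ‖g t‖ ^ 2) * D := by
        field_simp
        linear_combination -D * √(∑ t ∈ Icc 1 T, ‖g t‖ ^ 2) * h2

end AdaptiveStepSize

theorem inner_le_of_adaptiveStepSize_step {H : Type*} [NormedAddCommGroup H]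
    [InnerProductSpace ℝ H] {K : Set H} {proj : H → H} (hK : Convex ℝ K)
    (hmem : ∀ v, proj v ∈ K) (hmin : ∀ v, ∀ u ∈ K, ‖v - proj v‖ ≤ ‖v - u‖) {D : ℝ}
    (hD : ∀ w ∈ K, ∀ v ∈ K, ‖w - v‖ ≤ D) {g : ℕ → H} {t : ℕ} (ht : 1 ≤ t) {w w' u : H}
    (hw : w ∈ K) (hu : u ∈ K)
    (hstep : 0 < √(∑ τ ∈ Icc 1 t, ‖g τ‖ ^ 2) → w' = proj (w - adaptiveStepSize D g t • g t)) :
    ⟪g t, w - u⟫ ≤ (adaptiveStepSize D g t)⁻¹ * (‖w - u‖ ^ 2 - ‖w' - u‖ ^ 2) / 2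
      + adaptiveStepSize D g t * ‖g t‖ ^ 2 / 2 := by
  rcases (adaptiveStepSize_nonneg ((norm_nonneg _).trans (hD _ hw _ hw)) g t).eq_or_lt with h | h
  · rw [← h, inv_zero, zero_mul, zero_div, zero_mul, zero_div, add_zero]
    rcases eq_zero_of_adaptiveStepSize_eq_zero ht h.symm with rfl | hg
    · rw [norm_le_zero_iff.1 (hD _ hw _ hu), inner_zero_right]
    · rw [hg, inner_zero_left]
  · rw [hstep (sqrt_pos_of_adaptiveStepSize_pos h)]
    exact inner_le_of_proj_step hK hmem hmin h _ _ hu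

theorem stmt19_general
    {H : Type*} [NormedAddCommGroup H] [InnerProductSpace ℝ H]
    (K : Set H) (hKconvex : Convex ℝ K)
    (D : ℝ) (hD : ∀ w ∈ K, ∀ v ∈ K, ‖w - v‖ ≤ D)
    (proj : H → H)
    (hproj_mem : ∀ v, proj v ∈ K)
    (hproj_min : ∀ v, ∀ u ∈ K, ‖v - proj v‖ ≤ ‖v - u‖)
    (gt : ℕ → H)
    (w : ℕ → H) (hw1 : w 1 ∈ K)
    (hiter_pos : ∀ t, 1 ≤ t → 0 < Real.sqrt (∑ τ ∈ Icc 1 t, ‖gt τ‖ ^ 2) →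
      w (t + 1) = proj (w t -
        (D / (Real.sqrt 2 * Real.sqrt (∑ τ ∈ Icc 1 t, ‖gt τ‖ ^ 2))) • gt t))
    (hiter_zero : ∀ t, 1 ≤ t → Real.sqrt (∑ τ ∈ Icc 1 t, ‖gt τ‖ ^ 2) = 0 →
      w (t + 1) = w t)
    (wstar : H) (hwstar : wstar ∈ K)
    (T : ℕ) :
    (∑ t ∈ Icc 1 T, ⟪gt t, w t - wstar⟫) ≤
      Real.sqrt 2 * D * Real.sqrt (∑ t ∈ Icc 1 T, ‖gt t‖ ^ 2) := by
  have hD0 : 0 ≤ D := (norm_nonneg _).trans (hD _ hw1 _ hw1)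
  have hwK : ∀ t, 1 ≤ t → w t ∈ K := by
    intro t ht
    induction t, ht using Nat.le_induction with
    | base => exact hw1
    | succ t ht ih =>
      rcases (Real.sqrt_nonneg (∑ τ ∈ Icc 1 t, ‖gt τ‖ ^ 2)).eq_or_lt with h | h
      · rwa [hiter_zero t ht h.symm]
      · rw [hiter_pos t ht h]
        exact hproj_mem _
  calc ∑ t ∈ Icc 1 T, ⟪gt t, w t - wstar⟫
      ≤ ∑ t ∈ Icc 1 T, ((adaptiveStepSize D gt t)⁻¹
          * (‖w t - wstar‖ ^ 2 - ‖w (t + 1) - wstar‖ ^ 2) / 2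
          + adaptiveStepSize D gt t * ‖gt t‖ ^ 2 / 2) :=
        sum_le_sum fun t ht =>
          have ht : 1 ≤ t := (mem_Icc.1 ht).1
          inner_le_of_adaptiveStepSize_step hKconvex hproj_mem hproj_min hD ht (hwK t ht) hwstar
            (hiter_pos t ht)
    _ ≤ √2 * D * √(∑ t ∈ Icc 1 T, ‖gt t‖ ^ 2) := by
      rw [sum_add_distrib, ← sum_div, ← sum_div]
      have hdist := sum_inv_adaptiveStepSize_mul_sub_le hD0 (g := gt) (fun t => sq_nonneg _)
        (fun t ht => pow_le_pow_left₀ (norm_nonneg _) (hD _ (hwK t ht) _ hwstar) 2) T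
      have hgrad := sum_adaptiveStepSize_mul_sq_le hD0 (g := gt) T
      linarith

/-- deterministic pathwise linearized-regret bound for adaptive
projected descent fed with arbitrary (possibly noise-corrupted) vectors `g̃_t`. -/
theorem stmt19
    {H : Type*} [NormedAddCommGroup H] [InnerProductSpace ℝ H]
    (K : Set H) (hKne : K.Nonempty) (hKclosed : IsClosed K) (hKconvex : Convex ℝ K)
    (D : ℝ) (hD : ∀ w ∈ K, ∀ v ∈ K, ‖w - v‖ ≤ D)
    (proj : H → H)
    (hproj_mem : ∀ v, proj v ∈ K)
    (hproj_min : ∀ v, ∀ u ∈ K, ‖v - proj v‖ ≤ ‖v - u‖)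
    (gt : ℕ → H)
    (w : ℕ → H) (hw1 : w 1 ∈ K)
    (hiter_pos : ∀ t, 1 ≤ t → 0 < Real.sqrt (∑ τ ∈ Icc 1 t, ‖gt τ‖ ^ 2) →
      w (t + 1) = proj (w t -
        (D / (Real.sqrt 2 * Real.sqrt (∑ τ ∈ Icc 1 t, ‖gt τ‖ ^ 2))) • gt t))
    (hiter_zero : ∀ t, 1 ≤ t → Real.sqrt (∑ τ ∈ Icc 1 t, ‖gt τ‖ ^ 2) = 0 →
      w (t + 1) = w t)
    (wstar : H) (hwstar : wstar ∈ K)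
    (T : ℕ) (hT : 1 ≤ T) :
    (∑ t ∈ Icc 1 T, ⟪gt t, w t - wstar⟫) ≤
      Real.sqrt 2 * D * Real.sqrt (∑ t ∈ Icc 1 T, ‖gt t‖ ^ 2) :=
  stmt19_general K hKconvex D hD proj hproj_mem hproj_min gt w hw1 hiter_pos hiter_zero wstar hwstar
    T
end
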